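/- arXiv:2511.04867 — 6 statements merged into one kernel-verified Lean document; each statement's English description precedes it below -/
import Mathlib

section
/- Let X₁ = μ₁ + ε₁ and X₂ = μ₂ + ε₂ where μ₁ > μ₂ and ε₁, ε₂ are i.i.d. random variables whose common density f is symmetric about 0 and unimodal (increasing on (-∞,0], decreasing on [0,∞)). Then the density g of X = X₁ - X₂ is symmetric about μ₁ - μ₂ and unimodal, and consequently for every Δ > 0, g(Δ) > g(-Δ), i.e., conditional on |X₁ - X₂| = Δ, the event X₁ > X₂ is strictly more likely than X₁ < X₂. -/
open MeasureTheory Set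

/-!
Write `m = μ₁ - μ₂`. Then `g δ = h (δ - m)` for the autocorrelation `h t = ∫ f x * f (x - t)`,
which is even because `f` is. Folding the integral onto the half-line `x > 0` gives, for
`c, s > 0`,
`h (c - s) - h (c + s) = ∫_{x > 0} (f (x - c) - f (x + c)) * (f (x - s) - f (x + s))`,
and both factors are positive since `|x - a| < x + a` for `x, a > 0`. Hence `h` is strictly
decreasing in `|t|`, which gives the symmetry and unimodality of `g`; finally
`g Δ > g (-Δ)` because `|Δ - m| < Δ + m = |-Δ - m|`.
-/

noncomputable def autocorr (f : ℝ → ℝ) (t : ℝ) : ℝ := ∫ x, f x * f (x - t)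

theorem MeasureTheory.Integrable.mul_comp_sub_of_bound {f : ℝ → ℝ} (hf : Integrable f) {C : ℝ}
    (hC : ∀ x, ‖f x‖ ≤ C) (t : ℝ) : Integrable fun x => f x * f (x - t) := by
  simpa only [mul_comm] using
    hf.bdd_mul (hf.comp_sub_right t).aestronglyMeasurable (ae_of_all _ fun x => hC (x - t))

theorem integral_eq_integral_Ioi_add_comp_neg {E : Type*} [NormedAddCommGroup E]
    [NormedSpace ℝ E] {G : ℝ → E} (hG : Integrable G) :
    ∫ x, G x = ∫ x in Ioi 0, (G x + G (-x)) := by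
  rw [integral_add hG.integrableOn hG.comp_neg.integrableOn, integral_comp_neg_Ioi, neg_zero,
    ← compl_Iic, add_comm, integral_add_compl measurableSet_Iic hG]

theorem setIntegral_pos_of_forall_pos {α : Type*} [MeasurableSpace α] {μ : Measure α}
    {s : Set α} {G : α → ℝ} (hs : MeasurableSet s) (hμs : μ s ≠ 0) (hG : IntegrableOn G s μ)
    (hpos : ∀ x ∈ s, 0 < G x) : 0 < ∫ x in s, G x ∂μ := by
  rw [setIntegral_pos_iff_support_of_nonneg_ae
    (ae_restrict_of_forall_mem hs fun x hx => (hpos x hx).le) hG]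
  exact (pos_iff_ne_zero.2 hμs).trans_le (measure_mono fun x hx => ⟨(hpos x hx).ne', hx⟩)

section EvenUnimodal

variable {f : ℝ → ℝ}

theorem Function.Even.apply_abs (hf : f.Even) (x : ℝ) : f |x| = f x := by
  rcases abs_choice x with h | h <;> rw [h]
  exact hf x

theorem Function.Even.le_apply_zero (hf : f.Even) (hf_anti : AntitoneOn f (Ici 0)) (x : ℝ) :
    f x ≤ f 0 := by
  rw [← hf.apply_abs]
  exact hf_anti (mem_Ici.2 le_rfl) (mem_Ici.2 (abs_nonneg x)) (abs_nonneg x)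

theorem Function.Even.apply_add_lt_apply_sub (hf : f.Even) (hf_anti : StrictAntiOn f (Ici 0))
    {x a : ℝ} (hx : 0 < x) (ha : 0 < a) : f (x + a) < f (x - a) := by
  rw [← hf.apply_abs (x - a)]
  exact hf_anti (mem_Ici.2 (abs_nonneg _)) (mem_Ici.2 (by linarith)) (abs_lt.2 ⟨by linarith, by linarith⟩)

theorem autocorr_even (hf : f.Even) : (autocorr f).Even := fun t => by
  rw [autocorr, autocorr, ← integral_neg_eq_self]
  congr 1 with x
  rw [hf, show -x - -t = -(x - t) by ring, hf]

theorem integrable_mul_comp_add (hint : ∀ t, Integrable fun x => f x * f (x - t)) (a b : ℝ) :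
    Integrable fun x => f (x + a) * f (x + b) := by
  simpa only [show ∀ x, x + a - (a - b) = x + b from fun x => by ring] using
    (hint (a - b)).comp_add_right a

theorem integral_mul_comp_add (a b : ℝ) :
    ∫ x, f (x + a) * f (x + b) = autocorr f (a - b) := by
  rw [autocorr, ← integral_add_right_eq_self (fun x => f x * f (x - (a - b))) a]
  simp only [show ∀ x, x + a - (a - b) = x + b from fun x => by ring]

theorem autocorr_sub_autocorr (hint : ∀ t, Integrable fun x => f x * f (x - t)) (c s : ℝ) :
    autocorr f (c - s) - autocorr f (c + s) = ∫ x, f (x + c) * (f (x + s) - f (x + -s)) := by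
  simp only [mul_sub]
  rw [integral_sub (integrable_mul_comp_add hint c s) (integrable_mul_comp_add hint c (-s)),
    integral_mul_comp_add, integral_mul_comp_add, sub_neg_eq_add]

theorem autocorr_strictAntiOn (hf : f.Even) (hf_anti : StrictAntiOn f (Ici 0))
    (hint : ∀ t, Integrable fun x => f x * f (x - t)) : StrictAntiOn (autocorr f) (Ici 0) := by
  intro t₁ ht₁ t₂ _ hlt
  obtain ⟨c, s, rfl, rfl⟩ : ∃ c s, t₁ = c - s ∧ t₂ = c + s :=
    ⟨(t₁ + t₂) / 2, (t₂ - t₁) / 2, by ring, by ring⟩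
  have hs : 0 < s := by linarith
  have hc : 0 < c := by linarith [mem_Ici.1 ht₁]
  set G : ℝ → ℝ := fun x => f (x + c) * (f (x + s) - f (x + -s))
  have hG : Integrable G := by
    simp only [G, mul_sub]
    exact (integrable_mul_comp_add hint c s).sub (integrable_mul_comp_add hint c (-s))
  have fold : ∀ x, G x + G (-x) = (f (x - c) - f (x + c)) * (f (x - s) - f (x + s)) := by
    intro x
    simp only [G, show -x + c = -(x - c) by ring, show -x + s = -(x - s) by ring,
      show -x - s = -(x + s) by ring, hf _, ← sub_eq_add_neg]
    ring
  have hpos : 0 < ∫ x in Ioi 0, (G x + G (-x)) :=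
    setIntegral_pos_of_forall_pos measurableSet_Ioi (by simp) (hG.add hG.comp_neg).integrableOn
      fun x hx => (fold x).symm ▸ mul_pos (sub_pos.2 (hf.apply_add_lt_apply_sub hf_anti hx hc))
        (sub_pos.2 (hf.apply_add_lt_apply_sub hf_anti hx hs))
  rw [← integral_eq_integral_Ioi_add_comp_neg hG] at hpos
  linarith [autocorr_sub_autocorr hint c s]

theorem autocorr_lt_of_abs_lt (hf : f.Even) (hf_anti : StrictAntiOn f (Ici 0))
    (hint : ∀ t, Integrable fun x => f x * f (x - t)) {s t : ℝ} (h : |s| < |t|) :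
    autocorr f t < autocorr f s := by
  rw [← (autocorr_even hf).apply_abs t, ← (autocorr_even hf).apply_abs s]
  exact autocorr_strictAntiOn hf hf_anti hint (mem_Ici.2 (abs_nonneg s))
    (mem_Ici.2 (abs_nonneg t)) h

end EvenUnimodal

theorem stmt0_general
    (f : ℝ → ℝ) (μ₁ μ₂ : ℝ) (g : ℝ → ℝ)
    (hμ : μ₂ < μ₁)
    (hf_nonneg : ∀ x, 0 ≤ f x)
    (hf_int : Integrable f)
    (hf_symm : ∀ x, f (-x) = f x)
    (hf_anti : StrictAntiOn f (Ici (0 : ℝ)))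
    (hg : ∀ δ, g δ = ∫ ε, f ε * f (ε - δ + (μ₁ - μ₂))) :
    (∀ δ, g ((μ₁ - μ₂) + δ) = g ((μ₁ - μ₂) - δ)) ∧
    StrictMonoOn g (Iic (μ₁ - μ₂)) ∧
    StrictAntiOn g (Ici (μ₁ - μ₂)) ∧
    (∀ Δ : ℝ, 0 < Δ → g Δ > g (-Δ)) := by
  set m := μ₁ - μ₂
  have hf : f.Even := hf_symm
  have hint : ∀ t, Integrable fun x => f x * f (x - t) :=
    hf_int.mul_comp_sub_of_bound fun x => by
      rw [Real.norm_of_nonneg (hf_nonneg x)]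
      exact hf.le_apply_zero hf_anti.antitoneOn x
  have hg' : ∀ δ, g δ = autocorr f (δ - m) := fun δ => by
    rw [hg, autocorr]
    congr 1 with x
    ring_nf
  have lt_of_abs_lt {s t : ℝ} (h : |s| < |t|) := autocorr_lt_of_abs_lt hf hf_anti hint h
  refine ⟨fun δ => ?_, fun a ha b hb hab => ?_, fun a ha b hb hab => ?_, fun Δ hΔ => ?_⟩
  · rw [hg', hg', add_sub_cancel_left, sub_sub_cancel_left, autocorr_even hf]
  · rw [hg', hg']
    exact lt_of_abs_lt (by rw [abs_of_nonpos, abs_of_nonpos] <;> linarith [mem_Iic.1 hb])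
  · rw [hg', hg']
    exact lt_of_abs_lt (by rw [abs_of_nonneg, abs_of_nonneg] <;> linarith [mem_Ici.1 ha])
  · rw [hg', hg']
    refine lt_of_abs_lt ?_
    rw [abs_of_neg (by linarith : -Δ - m < 0)]
    exact abs_lt.2 ⟨by linarith, by linarith⟩

/-- If `f` is a symmetric, single-peaked (unimodal) probability
density of the i.i.d. noises `ε₁, ε₂`, and `X₁ = μ₁ + ε₁`, `X₂ = μ₂ + ε₂` with
`μ₁ > μ₂`, then the density `g` of `X₁ - X₂` (the convolution of `f` with its
reflection, shifted by `μ₁ - μ₂`) is symmetric about `μ₁ - μ₂`, unimodal, and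
satisfies `g Δ > g (-Δ)` for all `Δ > 0`. -/
theorem stmt0
    (f : ℝ → ℝ) (μ₁ μ₂ : ℝ) (g : ℝ → ℝ)
    (hμ : μ₂ < μ₁)
    (hf_nonneg : ∀ x, 0 ≤ f x)
    (hf_int : Integrable f)
    (hf_mass : ∫ x, f x = 1)
    (hf_symm : ∀ x, f (-x) = f x)
    (hf_mono : StrictMonoOn f (Iic (0 : ℝ)))
    (hf_anti : StrictAntiOn f (Ici (0 : ℝ)))
    (hg : ∀ δ, g δ = ∫ ε, f ε * f (ε - δ + (μ₁ - μ₂))) :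
    (∀ δ, g ((μ₁ - μ₂) + δ) = g ((μ₁ - μ₂) - δ)) ∧
    StrictMonoOn g (Iic (μ₁ - μ₂)) ∧
    StrictAntiOn g (Ici (μ₁ - μ₂)) ∧
    (∀ Δ : ℝ, 0 < Δ → g Δ > g (-Δ)) :=
  stmt0_general f μ₁ μ₂ g hμ hf_nonneg hf_int hf_symm hf_anti hg
end

section
/- In the superstar Plackett–Luce model with one item of value v₁ and n−1 items of value v₂ < v₁ and Gumbel noise scale β, the total probability that the high-value item is ranked in position i equals P[σ^i] = (e^{(v₁−v₂)/β} / (e^{(v₁−v₂)/β} + n − 1)) · ∏_{k=1}^{i−1} 1 / (1 + (e^{(v₁−v₂)/β} − 1)/(n − k)). -/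
/-!
Shifting all values by `v₂` leaves every Plackett–Luce factor unchanged, so the ordinary items
get weight `1` and the superstar weight `x = e^{(v₁-v₂)/β}`. The probability of an ordering then
depends only on the rank `i` of the superstar, and `(n-1)!` orderings share it. The closed form
follows by induction on `i`: the superstar misses rank `0` with probability `(n-1)/(x+n-1)`, and
the remaining ranks form a superstar model on `n - 1` items with the superstar at rank `i - 1`.
-/

open Finset

/-- Plackett–Luce probability of observing the ordering `σ` (rank `j` holds
item `σ j`) for values `w` and Gumbel noise scale `β`. -/
noncomputable def PLProb {n : ℕ} (β : ℝ) (w : Fin n → ℝ) (σ : Equiv.Perm (Fin n)) : ℝ :=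
  ∏ j : Fin n,
    Real.exp (w (σ j) / β) /
      ∑ ℓ ∈ Finset.univ.filter (fun ℓ : Fin n => j ≤ ℓ), Real.exp (w (σ ℓ) / β)

open Real Nat

theorem Equiv.Perm.card_filter_apply_eq {α : Type*} [Fintype α] [DecidableEq α] (a b : α) :
    #{σ : Equiv.Perm α | σ a = b} = (Fintype.card α - 1)! := by
  have hfiber : ∀ b', #{σ : Equiv.Perm α | σ a = b'} = #{σ : Equiv.Perm α | σ a = b} := by
    intro b'
    refine card_bij' (fun σ _ => swap b' b * σ) (fun σ _ => swap b' b * σ) ?_ ?_ ?_ ?_ <;>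
      simp_all [swap_mul_self_mul]
  have hpos : Fintype.card α ≠ 0 := (Fintype.card_pos_iff.mpr ⟨a⟩).ne'
  have htotal : Fintype.card α * (Fintype.card α - 1)! =
      Fintype.card α * #{σ : Equiv.Perm α | σ a = b} := by
    rw [mul_factorial_pred hpos, ← Fintype.card_perm, ← Finset.card_univ,
      card_eq_sum_card_fiberwise (f := fun σ : Equiv.Perm α => σ a) (t := univ) (by simp)]
    simp [hfiber]
  exact (Nat.eq_of_mul_eq_mul_left (Nat.pos_of_ne_zero hpos) htotal).symm

lemma PLProb_sub_const {n : ℕ} (β c : ℝ) (w : Fin n → ℝ) (σ : Equiv.Perm (Fin n)) :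
    PLProb β (fun m => w m - c) σ = PLProb β w σ := by
  have hexp : ∀ m, exp ((w m - c) / β) = exp (w m / β) * exp (-c / β) := by
    intro m
    rw [← exp_add, sub_div, neg_div, sub_eq_add_neg]
  refine prod_congr rfl fun j _ => ?_
  simp only [hexp, ← sum_mul]
  exact mul_div_mul_right _ _ (exp_pos _).ne'

lemma sum_filter_le_ite_eq {n : ℕ} (i j : Fin n) (x : ℝ) :
    ∑ ℓ ∈ univ.filter (fun ℓ : Fin n => j ≤ ℓ), (if ℓ = i then x else 1) =
      (if j ≤ i then x - 1 else 0) + ((n : ℝ) - j) := by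
  have hsplit : ∀ ℓ : Fin n, (if ℓ = i then x else 1) = (if ℓ = i then x - 1 else 0) + 1 := by
    intro ℓ
    split_ifs <;> ring
  rw [sum_congr rfl fun ℓ _ => hsplit ℓ, sum_add_distrib, sum_ite_eq', sum_const, nsmul_one,
    filter_le_eq_Ici, Fin.card_Ici, Nat.cast_sub j.isLt.le]
  simp only [mem_Ici]

/-- The rank-`j` factor (ranks counted from `0`) of the Plackett–Luce product when the
superstar has weight `x`, the other `n - 1` items weight `1`, and the superstar sits at rank `i`. -/
noncomputable def superstarFactor (x : ℝ) (n i j : ℕ) : ℝ :=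
  (if j = i then x else 1) / ((if j ≤ i then x - 1 else 0) + ((n : ℝ) - j))

lemma PLProb_eq_prod_superstarFactor {n : ℕ} {v₁ v₂ : ℝ} (β : ℝ) {w : Fin n → ℝ}
    (hw : ∀ m : Fin n, w m = if (m : ℕ) = 0 then v₁ else v₂) {i : Fin n}
    {σ : Equiv.Perm (Fin n)} (hσ : ((σ i : Fin n) : ℕ) = 0) :
    PLProb β w σ = ∏ j ∈ range n, superstarFactor (exp ((v₁ - v₂) / β)) n i j := by
  have hweight : ∀ ℓ, exp ((w (σ ℓ) - v₂) / β) = if ℓ = i then exp ((v₁ - v₂) / β) else 1 := by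
    intro ℓ
    have hsuperstar : ((σ ℓ : Fin n) : ℕ) = 0 ↔ ℓ = i := by
      rw [← hσ, Fin.val_inj, σ.injective.eq_iff]
    by_cases h : ℓ = i <;> simp [hw, h, hσ, hsuperstar]
  rw [← PLProb_sub_const β v₂, PLProb, ← Fin.prod_univ_eq_prod_range]
  refine prod_congr rfl fun j _ => ?_
  simp only [hweight]
  rw [sum_filter_le_ite_eq]
  simp only [superstarFactor, Fin.val_inj, Fin.le_iff_val_le_val]

lemma prod_range_natCast_sub (N : ℕ) : ∏ j ∈ range N, ((N : ℝ) - j) = N ! := by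
  induction N with
  | zero => simp
  | succ N ih =>
    rw [prod_range_succ', factorial_succ]
    push_cast
    simp only [add_sub_add_right_eq_sub, ih]
    ring

lemma factorial_mul_prod_superstarFactor {x : ℝ} (hx : 0 < x) {n i : ℕ} (hi : i < n) :
    ((n - 1)! : ℝ) * ∏ j ∈ range n, superstarFactor x n i j =
      x / (x + ((n : ℝ) - 1)) * ∏ k ∈ range i, 1 / (1 + (x - 1) / ((n : ℝ) - (k + 1))) := by
  induction i generalizing n with
  | zero =>
    obtain ⟨N, rfl⟩ : ∃ N, n = N + 1 := ⟨n - 1, by omega⟩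
    have htail : ∀ j ∈ range N, superstarFactor x (N + 1) 0 (j + 1) = ((N : ℝ) - j)⁻¹ := by
      intro j _
      simp [superstarFactor]
    rw [prod_range_succ', prod_congr rfl htail, prod_inv_distrib, prod_range_natCast_sub]
    rw [prod_range_zero, mul_one, Nat.add_sub_cancel, superstarFactor, if_pos rfl, if_pos le_rfl,
      ← mul_assoc, mul_inv_cancel₀ (mod_cast N.factorial_ne_zero), one_mul]
    push_cast
    ring
  | succ i ih =>
    obtain ⟨N, rfl⟩ : ∃ N, n = N + 1 := ⟨n - 1, by omega⟩
    have hN : N ≠ 0 := by omega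
    have hshift : ∀ j ∈ range N,
        superstarFactor x (N + 1) (i + 1) (j + 1) = superstarFactor x N i j := by
      intro j _
      simp [superstarFactor]
    have hshift' : ∀ k ∈ range i, 1 / (1 + (x - 1) / (((N + 1 : ℕ) : ℝ) - ((k + 1 : ℕ) + 1))) =
        1 / (1 + (x - 1) / ((N : ℝ) - (k + 1))) := by
      intro k _
      push_cast
      ring
    rw [prod_range_succ', prod_congr rfl hshift,
      prod_range_succ' (fun k => 1 / (1 + (x - 1) / (((N + 1 : ℕ) : ℝ) - (k + 1)))),
      prod_congr rfl hshift']
    calc ((N + 1 - 1)! : ℝ) *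
          ((∏ j ∈ range N, superstarFactor x N i j) * superstarFactor x (N + 1) (i + 1) 0)
        = N * superstarFactor x (N + 1) (i + 1) 0 *
            (((N - 1)! : ℝ) * ∏ j ∈ range N, superstarFactor x N i j) := by
          rw [Nat.add_sub_cancel, ← mul_factorial_pred hN]
          push_cast
          ring
      _ = N * superstarFactor x (N + 1) (i + 1) 0 *
            (x / (x + ((N : ℝ) - 1)) * ∏ k ∈ range i, 1 / (1 + (x - 1) / ((N : ℝ) - (k + 1)))) := by
          rw [ih (by omega)]
      _ = _ := by
          have hN1 : (1 : ℝ) ≤ N := mod_cast Nat.one_le_iff_ne_zero.mpr hN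
          have hx1 : 0 < x + ((N : ℝ) - 1) := by linarith
          generalize ∏ k ∈ range i, 1 / (1 + (x - 1) / ((N : ℝ) - (k + 1))) = Q
          rw [superstarFactor, if_neg (Nat.succ_ne_zero i).symm, if_pos (Nat.zero_le _)]
          push_cast
          simp only [sub_zero, zero_add, add_sub_cancel_right]
          rw [show x - 1 + (N + 1) = x + N by ring,
            show 1 + (x - 1) / N = (x + (N - 1)) / N by field_simp; ring]
          field_simp

theorem stmt2_general
    (n : ℕ) (v₁ v₂ β : ℝ)
    (w : Fin n → ℝ) (hw : ∀ m : Fin n, w m = if (m : ℕ) = 0 then v₁ else v₂)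
    (i : Fin n) :
    ∑ σ ∈ Finset.univ.filter (fun σ : Equiv.Perm (Fin n) => ((σ i : Fin n) : ℕ) = 0),
        PLProb β w σ =
      Real.exp ((v₁ - v₂) / β) / (Real.exp ((v₁ - v₂) / β) + (n - 1)) *
        ∏ k ∈ Finset.range i.val,
          1 / (1 + (Real.exp ((v₁ - v₂) / β) - 1) / ((n : ℝ) - (k + 1))) := by
  have hcard : #{σ : Equiv.Perm (Fin n) | ((σ i : Fin n) : ℕ) = 0} = (n - 1)! := by
    simpa only [Fin.ext_iff, Fintype.card_fin] using Equiv.Perm.card_filter_apply_eq i ⟨0, i.pos⟩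
  rw [sum_congr rfl fun σ hσ => PLProb_eq_prod_superstarFactor β hw (mem_filter.1 hσ).2,
    sum_const, hcard, nsmul_eq_mul]
  exact factorial_mul_prod_superstarFactor (exp_pos _) i.isLt

/-- In the superstar Plackett–Luce model (one item of value `v₁`,
the other `n-1` items of value `v₂ < v₁`, Gumbel noise scale `β > 0`), the
total probability that the high-value item is ranked in position `i`
(1-indexed position `i.val + 1`) equals
`(e^{(v₁−v₂)/β}/(e^{(v₁−v₂)/β}+n−1)) · ∏_{k=1}^{i−1} 1/(1+(e^{(v₁−v₂)/β}−1)/(n−k))`. -/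
theorem stmt2
    (n : ℕ) (hn : 0 < n) (v₁ v₂ β : ℝ) (hβ : 0 < β) (hv : v₂ < v₁)
    (w : Fin n → ℝ) (hw : ∀ m : Fin n, w m = if (m : ℕ) = 0 then v₁ else v₂)
    (i : Fin n) :
    ∑ σ ∈ Finset.univ.filter (fun σ : Equiv.Perm (Fin n) => ((σ i : Fin n) : ℕ) = 0),
        PLProb β w σ =
      Real.exp ((v₁ - v₂) / β) / (Real.exp ((v₁ - v₂) / β) + (n - 1)) *
        ∏ k ∈ Finset.range i.val,
          1 / (1 + (Real.exp ((v₁ - v₂) / β) - 1) / ((n : ℝ) - (k + 1))) :=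
  stmt2_general n v₁ v₂ β w hw i
end

section
/- In the superstar setting, if the permutation distribution satisfies P[σ^i] ≥ P[σ^j] for all i < j (expected value descending in rank), then for any realized free/busy status vector s with s_i = s_j for i < j, the posterior expected value at rank i is at least that at rank j: E[v_{σ_i} | s] ≥ E[v_{σ_j} | s]. Consequently the optimal choice is always either the top-ranked free candidate or the top-ranked busy candidate. -/
open Finset

/-!
Since `s i = s j`, swapping ranks `i` and `j` leaves the likelihood of `s` unchanged, so
`L i = L j`. Writing each posterior numerator as `Z * v₂ + L t * P t * (v₁ - v₂)`, the
comparison reduces to `L i * P i ≥ L j * P j`, which is the monotonicity of `P`.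
The busy penalty is the same for both ranks because their statuses agree.
-/

section

variable {ι : Type*} [Fintype ι] [DecidableEq ι]

theorem mul_prod_erase_eq_of_eq {M : Type*} [CommMonoid M] (f g : ι → M) {i j : ι}
    (hf : f i = f j) (hg : g i = g j) :
    f i * ∏ m ∈ univ.erase i, g m = f j * ∏ m ∈ univ.erase j, g m := by
  rcases eq_or_ne i j with rfl | hij
  · rfl
  rw [← mul_prod_erase _ _ (mem_erase.2 ⟨hij.symm, mem_univ j⟩),
    ← mul_prod_erase _ _ (mem_erase.2 ⟨hij, mem_univ i⟩), erase_right_comm, hf, hg,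
    mul_left_comm]

theorem sum_mul_ite_eq_add {R : Type*} [CommRing R] (w : ι → R) (t : ι) (a b : R) :
    ∑ k, w k * (if t = k then a else b) = (∑ k, w k) * b + w t * (a - b) := by
  have hsplit : ∀ k, w k * (if t = k then a else b) =
      w k * b + if t = k then w k * (a - b) else 0 := by
    intro k
    split_ifs <;> ring
  simp only [hsplit, sum_add_distrib, sum_ite_eq, mem_univ, if_true, sum_mul]

theorem sum_mul_ite_le_sum_mul_ite {w : ι → ℝ} {i j : ι} {a b : ℝ}
    (hw : w j ≤ w i) (hab : b ≤ a) :
    ∑ k, w k * (if j = k then a else b) ≤ ∑ k, w k * (if i = k then a else b) := by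
  rw [sum_mul_ite_eq_add, sum_mul_ite_eq_add]
  gcongr

end

theorem stmt5_general
    (n : ℕ) (v₁ v₂ p₁ p₂ γ : ℝ)
    (P : Fin n → ℝ) (s : Fin n → Bool) (L : Fin n → ℝ)
    (hv : v₂ ≤ v₁)
    (hp₁ : 0 ≤ p₁) (hp₁₂ : p₁ ≤ p₂) (hp₂ : p₂ ≤ 1)
    (hγ : 1 ≤ γ)
    (hPanti : ∀ a b : Fin n, a ≤ b → P b ≤ P a)
    (hL : ∀ k, L k =
      (if s k then p₁ else 1 - p₁) *
        ∏ m ∈ Finset.univ.erase k, (if s m then p₂ else 1 - p₂))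
    (hZ : 0 < ∑ k, L k * P k)
    (i j : Fin n) (hij : i < j) (hs : s i = s j) :
    ((∑ k, L k * P k * (if i = k then v₁ else v₂)) / (∑ k, L k * P k) ≥
        (∑ k, L k * P k * (if j = k then v₁ else v₂)) / (∑ k, L k * P k)) ∧
      ((∑ k, L k * P k * (if i = k then v₁ else v₂)) / (∑ k, L k * P k) /
            (if s i then 1 else γ) ≥
        (∑ k, L k * P k * (if j = k then v₁ else v₂)) / (∑ k, L k * P k) /
            (if s j then 1 else γ)) := by
  have hLij : L i = L j := by
    rw [hL, hL]
    exact mul_prod_erase_eq_of_eq (fun k => if s k then p₁ else 1 - p₁)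
      (fun k => if s k then p₂ else 1 - p₂) (by simp only [hs]) (by simp only [hs])
  have hLj : 0 ≤ L j := by
    rw [hL]
    exact mul_nonneg (ite_nonneg (by linarith) (by linarith))
      (prod_nonneg fun _ _ => ite_nonneg (by linarith) (by linarith))
  have hw : L j * P j ≤ L i * P i := by
    rw [hLij]
    exact mul_le_mul_of_nonneg_left (hPanti i j hij.le) hLj
  have hpost := div_le_div_of_nonneg_right
    (sum_mul_ite_le_sum_mul_ite (w := fun k => L k * P k) hw hv) hZ.le
  refine ⟨hpost, ?_⟩
  rw [hs]
  exact div_le_div_of_nonneg_right hpost (by split <;> linarith)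

/-- Superstar setting with `n` candidates, one of value `v₁` and
the rest of value `v₂ ≤ v₁`; the high-value candidate is free with
probability `p₁`, low-value candidates with probability `p₂ ≥ p₁`,
independently.  `P k` is the probability the high-value candidate is at rank
`k`, `s` is the realized free/busy status vector, and
`L k = P[s | σ^k]` is the likelihood of `s` given the high-value candidate at
rank `k`.  If `P` is descending in rank and `s i = s j` for ranks `i < j`,
then the posterior expected value at rank `i` is at least that at rank `j`,
and hence (dividing by the busy penalty `γ ≥ 1` when busy) picking rank `i`
is weakly better than picking rank `j`: the optimal choice is always the
top-ranked free or top-ranked busy candidate. -/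
theorem stmt5
    (n : ℕ) (v₁ v₂ p₁ p₂ γ : ℝ)
    (P : Fin n → ℝ) (s : Fin n → Bool) (L : Fin n → ℝ)
    (hv : v₂ ≤ v₁)
    (hp₁ : 0 ≤ p₁) (hp₁₂ : p₁ ≤ p₂) (hp₂ : p₂ ≤ 1)
    (hγ : 1 ≤ γ)
    (hPnonneg : ∀ k, 0 ≤ P k)
    (hPanti : ∀ a b : Fin n, a ≤ b → P b ≤ P a)
    (hL : ∀ k, L k =
      (if s k then p₁ else 1 - p₁) *
        ∏ m ∈ Finset.univ.erase k, (if s m then p₂ else 1 - p₂))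
    (hZ : 0 < ∑ k, L k * P k)
    (i j : Fin n) (hij : i < j) (hs : s i = s j) :
    ((∑ k, L k * P k * (if i = k then v₁ else v₂)) / (∑ k, L k * P k) ≥
        (∑ k, L k * P k * (if j = k then v₁ else v₂)) / (∑ k, L k * P k)) ∧
      ((∑ k, L k * P k * (if i = k then v₁ else v₂)) / (∑ k, L k * P k) /
            (if s i then 1 else γ) ≥
        (∑ k, L k * P k * (if j = k then v₁ else v₂)) / (∑ k, L k * P k) /
            (if s j then 1 else γ)) :=
  stmt5_general n v₁ v₂ p₁ p₂ γ P s L hv hp₁ hp₁₂ hp₂ hγ hPanti hL hZ i j hij hs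
end

section
/- Let a probability distribution over permutations of n distinctly-valued items be inversion-monotone: whenever permutation σ̃ is obtained from σ by swapping two items at positions i < j with v_{σ_i} > v_{σ_j}, then P[σ] ≥ P[σ̃]. Then for any status vector s with s_i = s_j (i < j), the posterior expected value satisfies E[v_{σ_i} | s] ≥ E[v_{σ_j} | s]; hence the firm's optimal choice is always the first free item or the first busy item. -/
/-!
Pair every permutation `σ` with `σ * swap i j`. The two share the likelihood of the observed
status vector, because `s i = s j`, so the contribution of the pair to
`∑ σ, L σ * P σ * (v (σ i) - v (σ j))` is `L σ * (P σ - P (σ * swap i j)) * (v (σ i) - v (σ j))`,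
and inversion monotonicity says exactly that the two last factors have the same sign.
-/

def InversionMonotone {α : Type*} [LinearOrder α] (v : α → ℝ) (P : Equiv.Perm α → ℝ) : Prop :=
  ∀ (σ : Equiv.Perm α) (i j : α), i < j → v (σ j) < v (σ i) → P (σ * Equiv.swap i j) ≤ P σ

theorem InversionMonotone.sub_mul_sub_nonneg {α : Type*} [LinearOrder α] {v : α → ℝ}
    {P : Equiv.Perm α → ℝ} (hP : InversionMonotone v P) (σ : Equiv.Perm α) {i j : α}
    (hij : i < j) : 0 ≤ (P σ - P (σ * Equiv.swap i j)) * (v (σ i) - v (σ j)) := by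
  rcases lt_trichotomy (v (σ i)) (v (σ j)) with hlt | heq | hgt
  · have h := hP (σ * Equiv.swap i j) i j hij (by simpa using hlt)
    rw [mul_assoc, Equiv.swap_mul_self, mul_one] at h
    exact mul_nonneg_of_nonpos_of_nonpos (by linarith) (by linarith)
  · simp [heq]
  · exact mul_nonneg (by linarith [hP σ i j hij hgt]) (by linarith)

theorem Fintype.sum_nonneg_of_add_mul_right_nonneg {G : Type*} [Group G] [Fintype G]
    (f : G → ℝ) (g : G) (hf : ∀ σ, 0 ≤ f σ + f (σ * g)) : 0 ≤ ∑ σ, f σ := by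
  have hshift : ∑ σ, f (σ * g) = ∑ σ, f σ := Equiv.sum_comp (Equiv.mulRight g) f
  have hpair : 0 ≤ ∑ σ, (f σ + f (σ * g)) := Finset.sum_nonneg fun σ _ => hf σ
  rw [Finset.sum_add_distrib, hshift] at hpair
  linarith

theorem Fintype.prod_apply_mul_swap {α M : Type*} [Fintype α] [DecidableEq α] [CommMonoid M]
    (f : α → α → M) {i j : α} (hf : ∀ m, f (Equiv.swap i j m) = f m) (σ : Equiv.Perm α) :
    ∏ m, f m ((σ * Equiv.swap i j) m) = ∏ m, f m (σ m) :=
  Fintype.prod_equiv (Equiv.swap i j) _ _ fun m => by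
    rw [hf, Equiv.Perm.mul_apply]

theorem apply_swap_eq_of_apply_eq {α β : Type*} [DecidableEq α] {s : α → β} {i j : α}
    (hs : s i = s j) (m : α) : s (Equiv.swap i j m) = s m := by
  rw [Equiv.swap_apply_def]
  split_ifs with hi hj
  · rw [hi, hs]
  · rw [hj, hs]
  · rfl

theorem InversionMonotone.sum_mul_apply_le {α : Type*} [LinearOrder α] [Fintype α]
    {v : α → ℝ} {P : Equiv.Perm α → ℝ} (hP : InversionMonotone v P) {w : Equiv.Perm α → ℝ}
    (hw : ∀ σ, 0 ≤ w σ) {i j : α} (hij : i < j) (hwswap : ∀ σ, w (σ * Equiv.swap i j) = w σ) :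
    ∑ σ, w σ * P σ * v (σ j) ≤ ∑ σ, w σ * P σ * v (σ i) := by
  have hdiff : 0 ≤ ∑ σ, w σ * P σ * (v (σ i) - v (σ j)) := by
    refine Fintype.sum_nonneg_of_add_mul_right_nonneg _ (Equiv.swap i j) fun σ => ?_
    have hpair : w σ * P σ * (v (σ i) - v (σ j)) + w (σ * Equiv.swap i j) *
          P (σ * Equiv.swap i j) * (v ((σ * Equiv.swap i j) i) - v ((σ * Equiv.swap i j) j)) =
        w σ * ((P σ - P (σ * Equiv.swap i j)) * (v (σ i) - v (σ j))) := by
      simp only [hwswap, Equiv.Perm.mul_apply, Equiv.swap_apply_left, Equiv.swap_apply_right]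
      ring
    rw [hpair]
    exact mul_nonneg (hw σ) (hP.sub_mul_sub_nonneg σ hij)
  simp only [mul_sub, Finset.sum_sub_distrib] at hdiff
  linarith

theorem stmt6_general
    (n : ℕ) (v : Fin n → ℝ) (p : ℝ → ℝ) (γ : ℝ)
    (P : Equiv.Perm (Fin n) → ℝ) (s : Fin n → Bool) (L : Equiv.Perm (Fin n) → ℝ)
    (hp01 : ∀ x, 0 ≤ p x ∧ p x ≤ 1)
    (hγ : 1 ≤ γ)
    (hinv : ∀ (σ : Equiv.Perm (Fin n)) (i j : Fin n), i < j →
      v (σ j) < v (σ i) → P (σ * Equiv.swap i j) ≤ P σ)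
    (hL : ∀ σ, L σ =
      ∏ m : Fin n, (if s m then p (v (σ m)) else 1 - p (v (σ m))))
    (hZ : 0 < ∑ σ : Equiv.Perm (Fin n), L σ * P σ)
    (i j : Fin n) (hij : i < j) (hs : s i = s j) :
    ((∑ σ : Equiv.Perm (Fin n), L σ * P σ * v (σ i)) /
          (∑ σ : Equiv.Perm (Fin n), L σ * P σ) ≥
        (∑ σ : Equiv.Perm (Fin n), L σ * P σ * v (σ j)) /
          (∑ σ : Equiv.Perm (Fin n), L σ * P σ)) ∧
      ((∑ σ : Equiv.Perm (Fin n), L σ * P σ * v (σ i)) /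
            (∑ σ : Equiv.Perm (Fin n), L σ * P σ) / (if s i then 1 else γ) ≥
        (∑ σ : Equiv.Perm (Fin n), L σ * P σ * v (σ j)) /
            (∑ σ : Equiv.Perm (Fin n), L σ * P σ) / (if s j then 1 else γ)) := by
  have hLnonneg : ∀ σ, 0 ≤ L σ := fun σ => by
    rw [hL]
    exact Finset.prod_nonneg fun m _ => by split <;> linarith [hp01 (v (σ m))]
  have hLswap : ∀ σ, L (σ * Equiv.swap i j) = L σ := fun σ => by
    rw [hL, hL]
    exact Fintype.prod_apply_mul_swap (fun m x => if s m then p (v x) else 1 - p (v x))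
      (fun m => by rw [apply_swap_eq_of_apply_eq hs]) σ
  have hle := InversionMonotone.sum_mul_apply_le hinv hLnonneg hij hLswap
  have hmean := div_le_div_of_nonneg_right hle hZ.le
  have hpenalty : (0 : ℝ) ≤ if s j then 1 else γ := by split <;> linarith
  rw [hs]
  exact ⟨hmean, div_le_div_of_nonneg_right hmean hpenalty⟩

/-- Let a probability distribution `P` over permutations of `n`
distinctly-valued items (values `v`, strictly descending in item index, free
probability `p ∘ v` weakly decreasing in value) be inversion-monotone:
whenever `σ̃` is obtained from `σ` by swapping two positions `i < j` with
`v (σ i) > v (σ j)`, then `P σ ≥ P σ̃`.  Then for any status vector `s` with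
`s i = s j` (`i < j`), the posterior expected value at rank `i` is at least
that at rank `j`; hence (dividing by the busy penalty `γ ≥ 1` when busy) the
firm's optimal choice is always the first free item or the first busy item. -/
theorem stmt6
    (n : ℕ) (v : Fin n → ℝ) (p : ℝ → ℝ) (γ : ℝ)
    (P : Equiv.Perm (Fin n) → ℝ) (s : Fin n → Bool) (L : Equiv.Perm (Fin n) → ℝ)
    (hv : StrictAnti v) (hvpos : ∀ m, 0 < v m)
    (hp01 : ∀ x, 0 ≤ p x ∧ p x ≤ 1)
    (hpanti : ∀ a b : ℝ, a ≤ b → p b ≤ p a)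
    (hγ : 1 ≤ γ)
    (hPnonneg : ∀ σ, 0 ≤ P σ)
    (hinv : ∀ (σ : Equiv.Perm (Fin n)) (i j : Fin n), i < j →
      v (σ j) < v (σ i) → P (σ * Equiv.swap i j) ≤ P σ)
    (hL : ∀ σ, L σ =
      ∏ m : Fin n, (if s m then p (v (σ m)) else 1 - p (v (σ m))))
    (hZ : 0 < ∑ σ : Equiv.Perm (Fin n), L σ * P σ)
    (i j : Fin n) (hij : i < j) (hs : s i = s j) :
    ((∑ σ : Equiv.Perm (Fin n), L σ * P σ * v (σ i)) /
          (∑ σ : Equiv.Perm (Fin n), L σ * P σ) ≥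
        (∑ σ : Equiv.Perm (Fin n), L σ * P σ * v (σ j)) /
          (∑ σ : Equiv.Perm (Fin n), L σ * P σ)) ∧
      ((∑ σ : Equiv.Perm (Fin n), L σ * P σ * v (σ i)) /
            (∑ σ : Equiv.Perm (Fin n), L σ * P σ) / (if s i then 1 else γ) ≥
        (∑ σ : Equiv.Perm (Fin n), L σ * P σ * v (σ j)) /
            (∑ σ : Equiv.Perm (Fin n), L σ * P σ) / (if s j then 1 else γ)) :=
  stmt6_general n v p γ P s L hp01 hγ hinv hL hZ i j hij hs
end

section
/- In the superstar setting, a firm using first-free with window k picks the top-ranked candidate with probability p₂ + (1−p₂)^k + (p₂−p₁)·((1−p₂)^{k−1} P_k − P₁), where P₁ = P[σ^1] and P_k = Σ_{i=1}^k P[σ^i]. Moreover, this probability is strictly larger for window size k−1 than for window size k (holding the ranking distribution fixed), i.e., shrinking the window increases the chance the top-ranked candidate is selected. -/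
/-!
Conditioning on whether the high-value candidate is ranked first, resp. lies in the
top `k`, gives the closed form by algebra. Passing from window `k` to `k - 1` changes it by
`(1-p₂)^(k-2) · ((1-p₂)·(p₂ - (p₂-p₁)·P_k) + (p₂-p₁)·P_{k-1})`, and `P_k ≤ 1` makes
`p₂ - (p₂-p₁)·P_k ≥ p₁ > 0`, so the smaller window wins.
-/

lemma firstFree_top_prob_eq (p₁ p₂ P1 Pk : ℝ) {k : ℕ} (hk : 1 ≤ k) :
    p₁ * P1 + p₂ * (1 - P1) +
        ((1 - p₁) * (1 - p₂) ^ (k - 1) * Pk + (1 - p₂) ^ k * (1 - Pk)) =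
      p₂ + (1 - p₂) ^ k + (p₂ - p₁) * ((1 - p₂) ^ (k - 1) * Pk - P1) := by
  obtain ⟨j, rfl⟩ := Nat.exists_eq_add_of_le' hk
  simp only [Nat.add_sub_cancel, pow_succ]
  ring

lemma firstFree_top_prob_sub_succ (p₁ p₂ P1 Pk Pk' : ℝ) (j : ℕ) :
    (p₂ + (1 - p₂) ^ (j + 1) + (p₂ - p₁) * ((1 - p₂) ^ j * Pk' - P1)) -
        (p₂ + (1 - p₂) ^ (j + 2) + (p₂ - p₁) * ((1 - p₂) ^ (j + 1) * Pk - P1)) =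
      (1 - p₂) ^ j *
        ((1 - p₂) * (p₂ - (p₂ - p₁) * Pk) + (p₂ - p₁) * Pk') := by
  ring

lemma firstFree_top_prob_lt_of_succ (p₁ p₂ P1 Pk Pk' : ℝ) (j : ℕ)
    (hp₁ : 0 < p₁) (hp₁₂ : p₁ < p₂) (hp₂ : p₂ < 1)
    (hPk' : 0 ≤ Pk') (hPk : Pk ≤ 1) :
    p₂ + (1 - p₂) ^ (j + 2) + (p₂ - p₁) * ((1 - p₂) ^ (j + 1) * Pk - P1) <
      p₂ + (1 - p₂) ^ (j + 1) + (p₂ - p₁) * ((1 - p₂) ^ j * Pk' - P1) := by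
  have hp₁₂' : 0 ≤ p₂ - p₁ := sub_nonneg.mpr hp₁₂.le
  have hmix : 0 < p₂ - (p₂ - p₁) * Pk := by
    nlinarith [mul_le_mul_of_nonneg_left hPk hp₁₂']
  have hgain : 0 < (1 - p₂) ^ j *
      ((1 - p₂) * (p₂ - (p₂ - p₁) * Pk) + (p₂ - p₁) * Pk') :=
    mul_pos (pow_pos (sub_pos.mpr hp₂) j)
      (add_pos_of_pos_of_nonneg (mul_pos (sub_pos.mpr hp₂) hmix) (mul_nonneg hp₁₂' hPk'))
  rw [← firstFree_top_prob_sub_succ] at hgain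
  linarith

theorem stmt13_general
    (p₁ p₂ P1 Pk Pk' : ℝ) (k : ℕ)
    (hp₁ : 0 < p₁) (hp₁₂ : p₁ < p₂) (hp₂ : p₂ < 1) (hk : 2 ≤ k)
    (hP1 : 0 ≤ P1) (hP1k' : P1 ≤ Pk') (hPk : Pk ≤ 1) :
    (p₁ * P1 + p₂ * (1 - P1) +
        ((1 - p₁) * (1 - p₂) ^ (k - 1) * Pk + (1 - p₂) ^ k * (1 - Pk)) =
      p₂ + (1 - p₂) ^ k + (p₂ - p₁) * ((1 - p₂) ^ (k - 1) * Pk - P1)) ∧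
    (p₂ + (1 - p₂) ^ k + (p₂ - p₁) * ((1 - p₂) ^ (k - 1) * Pk - P1) <
      p₂ + (1 - p₂) ^ (k - 1) + (p₂ - p₁) * ((1 - p₂) ^ (k - 2) * Pk' - P1)) := by
  refine ⟨firstFree_top_prob_eq p₁ p₂ P1 Pk (by omega), ?_⟩
  obtain ⟨j, rfl⟩ := Nat.exists_eq_add_of_le' hk
  simpa only [Nat.add_sub_cancel, Nat.add_succ_sub_one] using
    firstFree_top_prob_lt_of_succ p₁ p₂ P1 Pk Pk' j hp₁ hp₁₂ hp₂
      (hP1.trans hP1k') hPk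

/-- In the superstar setting, a firm using first-free with
window `k` picks the top-ranked candidate iff the rank-1 candidate is free or
all top `k` candidates are busy; this probability equals
`p₂ + (1−p₂)^k + (p₂−p₁)·((1−p₂)^{k−1}·P_k − P₁)`, where `P₁ = P[σ^1]` and
`P_k` is the probability the high-value candidate is in the top `k`.
Moreover, this probability is strictly larger for window size `k−1` (with its
value `P_{k−1}`) than for window size `k`: shrinking the window increases the
chance the top-ranked candidate is selected. -/
theorem stmt13
    (p₁ p₂ P1 Pk Pk' : ℝ) (k : ℕ)
    (hp₁ : 0 < p₁) (hp₁₂ : p₁ < p₂) (hp₂ : p₂ < 1) (hk : 2 ≤ k)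
    (hP1 : 0 ≤ P1) (hP1k' : P1 ≤ Pk') (hPk' : Pk' ≤ Pk) (hPk : Pk ≤ 1) :
    (p₁ * P1 + p₂ * (1 - P1) +
        ((1 - p₁) * (1 - p₂) ^ (k - 1) * Pk + (1 - p₂) ^ k * (1 - Pk)) =
      p₂ + (1 - p₂) ^ k + (p₂ - p₁) * ((1 - p₂) ^ (k - 1) * Pk - P1)) ∧
    (p₂ + (1 - p₂) ^ k + (p₂ - p₁) * ((1 - p₂) ^ (k - 1) * Pk - P1) <
      p₂ + (1 - p₂) ^ (k - 1) + (p₂ - p₁) * ((1 - p₂) ^ (k - 2) * Pk' - P1)) :=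
  stmt13_general p₁ p₂ P1 Pk Pk' k hp₁ hp₁₂ hp₂ hk hP1 hP1k' hPk
end

section
/- In the Plackett–Luce model with distinct values v_1 > v_2 > ... > v_n > 0 and noise scales 0 < α < β, for any set S of items not containing items i and k (v_i > v_k): if decreasing the noise scale from β to α strictly decreases the probability that item i is ranked above all items in S ∪ {k} (i.e., exp(v_i/β)/(S_β + exp(v_i/β) + exp(v_k/β)) > exp(v_i/α)/(S_α + exp(v_i/α) + exp(v_k/α)) where S_t = Σ_{ℓ∈S} exp(v_ℓ/t)), then it also strictly decreases the corresponding probability for item k. Concretely, the hypothesis implies S_α/S_β > exp(v_i(1/α − 1/β)) ≥ exp(v_k(1/α − 1/β)), which yields the conclusion. -/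
open Finset

/-! Write `c = 1/α - 1/β > 0`. Passing from scale `β` to scale `α` multiplies the weight
`e^{v/β}` of an item by `e^{v c}`, which is increasing in `v`. For item `i` to lose
probability, the block `S` must therefore grow by a factor larger than `e^{v_i c}`; since item
`k` grows by the smaller factor `e^{v_k c}`, both `S` and item `i` outgrow it, and item `k`
loses probability as well. -/

section Shares

variable {K : Type*} [Field K] [LinearOrder K] [IsStrictOrderedRing K] {a b x y r s : K}

theorem mul_lt_of_div_add_lt_div_add (ha : 0 ≤ a) (hb : 0 ≤ b) (hx : 0 < x) (hy : 0 < y)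
    (hs : 0 < s) (hsr : s < r) (h : x * r / (a + x * r + y * s) < x / (b + x + y)) :
    r * b < a := by
  have hr := hs.trans hsr
  rw [div_lt_div_iff₀ (by positivity) (by positivity)] at h
  have hcancel : r * (b + x + y) < a + x * r + y * s := by nlinarith
  nlinarith

theorem div_add_lt_div_add_of_mul_lt (ha : 0 ≤ a) (hb : 0 ≤ b) (hx : 0 < x) (hy : 0 < y)
    (hs : 0 < s) (hsr : s < r) (h : r * b < a) :
    y * s / (a + x * r + y * s) < y / (b + x + y) := by
  have hr := hs.trans hsr
  rw [div_lt_div_iff₀ (by positivity) (by positivity)]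
  have hsb : s * b ≤ r * b := mul_le_mul_of_nonneg_right hsr.le hb
  have hsx : s * x < r * x := mul_lt_mul_of_pos_right hsr hx
  nlinarith

end Shares

theorem Real.exp_div_eq_exp_div_mul_exp (v α β : ℝ) :
    Real.exp (v / α) = Real.exp (v / β) * Real.exp (v * (1 / α - 1 / β)) := by
  rw [← Real.exp_add]
  ring_nf

theorem stmt18_general
    {ι : Type*} (S : Finset ι) (hS : S.Nonempty) (w : ι → ℝ)
    (vi vk α β : ℝ)
    (hα : 0 < α) (hαβ : α < β)
    (hvik : vk < vi)
    (hyp : Real.exp (vi / α) /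
        ((∑ ℓ ∈ S, Real.exp (w ℓ / α)) + Real.exp (vi / α) + Real.exp (vk / α)) <
      Real.exp (vi / β) /
        ((∑ ℓ ∈ S, Real.exp (w ℓ / β)) + Real.exp (vi / β) + Real.exp (vk / β))) :
    Real.exp (vi * (1 / α - 1 / β)) <
        (∑ ℓ ∈ S, Real.exp (w ℓ / α)) / (∑ ℓ ∈ S, Real.exp (w ℓ / β)) ∧
      Real.exp (vk * (1 / α - 1 / β)) ≤ Real.exp (vi * (1 / α - 1 / β)) ∧
      Real.exp (vk / α) /
          ((∑ ℓ ∈ S, Real.exp (w ℓ / α)) + Real.exp (vi / α) + Real.exp (vk / α)) <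
        Real.exp (vk / β) /
          ((∑ ℓ ∈ S, Real.exp (w ℓ / β)) + Real.exp (vi / β) + Real.exp (vk / β)) := by
  have hc : 0 < 1 / α - 1 / β := sub_pos.mpr (one_div_lt_one_div_of_lt hα hαβ)
  have hgrowth : Real.exp (vk * (1 / α - 1 / β)) < Real.exp (vi * (1 / α - 1 / β)) :=
    Real.exp_lt_exp.mpr (mul_lt_mul_of_pos_right hvik hc)
  have hA : 0 ≤ ∑ ℓ ∈ S, Real.exp (w ℓ / α) := sum_nonneg fun _ _ ↦ (Real.exp_pos _).le
  have hB : 0 < ∑ ℓ ∈ S, Real.exp (w ℓ / β) := sum_pos (fun _ _ ↦ Real.exp_pos _) hS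
  rw [Real.exp_div_eq_exp_div_mul_exp vi α β, Real.exp_div_eq_exp_div_mul_exp vk α β] at hyp ⊢
  have hS_growth := mul_lt_of_div_add_lt_div_add hA hB.le (Real.exp_pos _) (Real.exp_pos _)
    (Real.exp_pos _) hgrowth hyp
  exact ⟨(lt_div_iff₀ hB).mpr hS_growth, hgrowth.le,
    div_add_lt_div_add_of_mul_lt hA hB.le (Real.exp_pos _) (Real.exp_pos _) (Real.exp_pos _)
      hgrowth hS_growth⟩

/-- Plackett–Luce majorization. With positive values
`v_i > v_k > 0`, noise scales `0 < α < β`, and a nonempty finite set `S` of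
other items with values `w`, write `S_t = Σ_{ℓ∈S} e^{w ℓ/t}`.  If decreasing
the noise scale from `β` to `α` strictly decreases the probability that item
`i` is ranked above all items of `S ∪ {k}`, i.e.
`e^{v_i/β}/(S_β + e^{v_i/β} + e^{v_k/β}) > e^{v_i/α}/(S_α + e^{v_i/α} + e^{v_k/α})`,
then `S_α/S_β > e^{v_i(1/α − 1/β)} ≥ e^{v_k(1/α − 1/β)}`, and the
corresponding top-choice probability for item `k` also strictly decreases. -/
theorem stmt18
    {ι : Type*} (S : Finset ι) (hS : S.Nonempty) (w : ι → ℝ)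
    (vi vk α β : ℝ)
    (hα : 0 < α) (hαβ : α < β)
    (hvk : 0 < vk) (hvik : vk < vi)
    (hyp : Real.exp (vi / α) /
        ((∑ ℓ ∈ S, Real.exp (w ℓ / α)) + Real.exp (vi / α) + Real.exp (vk / α)) <
      Real.exp (vi / β) /
        ((∑ ℓ ∈ S, Real.exp (w ℓ / β)) + Real.exp (vi / β) + Real.exp (vk / β))) :
    Real.exp (vi * (1 / α - 1 / β)) <
        (∑ ℓ ∈ S, Real.exp (w ℓ / α)) / (∑ ℓ ∈ S, Real.exp (w ℓ / β)) ∧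
      Real.exp (vk * (1 / α - 1 / β)) ≤ Real.exp (vi * (1 / α - 1 / β)) ∧
      Real.exp (vk / α) /
          ((∑ ℓ ∈ S, Real.exp (w ℓ / α)) + Real.exp (vi / α) + Real.exp (vk / α)) <
        Real.exp (vk / β) /
          ((∑ ℓ ∈ S, Real.exp (w ℓ / β)) + Real.exp (vi / β) + Real.exp (vk / β)) :=
  stmt18_general S hS w vi vk α β hα hαβ hvik hyp
end
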